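/- Let m ≥ 1, μ ≥ 1, and let A(i,j) ≥ 0 for 1 ≤ i ≤ j ≤ m with A(i,i) ≤ μ for all i. Suppose l : G → ℝ≥0 decomposes as l(g) = Σ_{r=1}^m L_r(g) with each L_r(g) ≤ l(g), and L_r(α(g)) ≤ Σ_{i≥r} A(r,i)·L_i(g) for all g ∈ G and all r. Then there exists a polynomial P of degree at most m−1 such that l(α^k(g)) ≤ P(k)·μ^k·l(g) for all g ∈ G and all k ≥ 1. -/
import Mathlib


open Polynomial

set_option maxHeartbeats 1000000 in
theorem polynomial_bound {G : Type*} [Group G] (α : G →* G)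
    (m : ℕ) (hm : 1 ≤ m) (μ : ℝ) (hμ : 1 ≤ μ)
    (A : ℕ → ℕ → ℝ) (hA : ∀ i j, 1 ≤ i → i ≤ j → j ≤ m → 0 ≤ A i j)
    (hdiag : ∀ i, 1 ≤ i → i ≤ m → A i i ≤ μ)
    (l : G → ℝ) (hl : ∀ g, 0 ≤ l g)
    (L : ℕ → G → ℝ) (hLnonneg : ∀ r g, 0 ≤ L r g)
    (hdecomp : ∀ g, l g = ∑ r ∈ Finset.Icc 1 m, L r g)
    (hLle : ∀ r g, L r g ≤ l g)
    (hstep : ∀ r, 1 ≤ r → r ≤ m → ∀ g : G,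
      L r (α g) ≤ ∑ i ∈ Finset.Icc r m, A r i * L i g) :
    ∃ P : Polynomial ℝ, P.natDegree ≤ m - 1 ∧
      ∀ g : G, ∀ k : ℕ, 1 ≤ k →
        l ((⇑α)^[k] g) ≤ P.eval (k : ℝ) * μ ^ k * l g := by
  classical
  set S : ℝ := ∑ p ∈ (Finset.Icc 1 m ×ˢ Finset.Icc 1 m).filter (fun p => p.1 ≤ p.2),
      A p.1 p.2 with hSdef
  have hS0 : 0 ≤ S := by
    apply Finset.sum_nonneg
    rintro ⟨i, j⟩ hp
    simp only [Finset.mem_filter, Finset.mem_product, Finset.mem_Icc] at hp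
    exact hA i j hp.1.1.1 hp.2 hp.1.2.2
  set B : ℝ := μ + S with hBdef
  have hB1 : 1 ≤ B := by linarith
  have hB0 : 0 ≤ B := by linarith
  have hAB : ∀ i j, 1 ≤ i → i ≤ j → j ≤ m → A i j ≤ B := by
    intro i j h1 h2 h3
    have hmem : (i, j) ∈ (Finset.Icc 1 m ×ˢ Finset.Icc 1 m).filter (fun p => p.1 ≤ p.2) := by
      simp only [Finset.mem_filter, Finset.mem_product, Finset.mem_Icc]
      omega
    have hle : A i j ≤ S :=
      Finset.single_le_sum (f := fun p : ℕ × ℕ => A p.1 p.2)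
        (by
          rintro ⟨a, b⟩ hp
          simp only [Finset.mem_filter, Finset.mem_product, Finset.mem_Icc] at hp
          exact hA a b hp.1.1.1 hp.2 hp.1.2.2) hmem
    linarith
  set Cc : ℝ := 1 + (m : ℝ) * B with hCdef
  have hmB0 : (0:ℝ) ≤ (m : ℝ) * B := mul_nonneg (by positivity) hB0
  have hC1 : 1 ≤ Cc := by linarith
  have hC0 : 0 ≤ Cc := by linarith
  have hmB : (m : ℝ) * B ≤ Cc := by linarith
  -- key lemma
  have key : ∀ d : ℕ, ∀ r, 1 ≤ r → r ≤ m → m - r ≤ d → ∀ k, ∀ g : G,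
      L r ((⇑α)^[k] g) ≤ (Cc * ((k : ℝ) + 1)) ^ (m - r) * μ ^ k * l g := by
    intro d
    induction d with
    | zero =>
      intro r h1 h2 h0 k g
      have hrm : r = m := by omega
      -- bottom stratum: pure μ-growth
      have hbase : ∀ k, L m ((⇑α)^[k] g) ≤ μ ^ k * l g := by
        intro k
        induction k with
        | zero => simpa using hLle m g
        | succ k ih =>
          rw [Function.iterate_succ_apply']
          calc L m (α ((⇑α)^[k] g))
              ≤ ∑ i ∈ Finset.Icc m m, A m i * L i ((⇑α)^[k] g) := hstep m hm le_rfl _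
            _ = A m m * L m ((⇑α)^[k] g) := by rw [Finset.Icc_self, Finset.sum_singleton]
            _ ≤ μ * (μ ^ k * l g) := by
                have hμ0 : (0:ℝ) ≤ μ := by linarith
                exact mul_le_mul (hdiag m hm le_rfl) ih (hLnonneg _ _) hμ0
            _ = μ ^ (k + 1) * l g := by ring
      rw [hrm]
      simpa [Nat.sub_self] using hbase k
    | succ d ihd =>
      intro r h1 h2 hd k g
      by_cases hcase : m - r ≤ d
      · exact ihd r h1 h2 hcase k g
      · have hrm : r < m := by omega
        have he : m - r = (m - (r + 1)) + 1 := by omega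
        set e := m - (r + 1) with hedef
        induction k with
        | zero =>
          simp only [Function.iterate_zero_apply, Nat.cast_zero, pow_zero, mul_one]
          have hge1 : (1:ℝ) ≤ (Cc * ((0:ℝ) + 1)) ^ (m - r) := one_le_pow₀ (by linarith)
          have := mul_le_mul_of_nonneg_right hge1 (hl g)
          have h' := hLle r g
          linarith
        | succ k ihk =>
          rw [Function.iterate_succ_apply']
          set x := (⇑α)^[k] g with hx
          have hk20 : (0:ℝ) ≤ (k : ℝ) + 2 := by positivity
          have hk10 : (0:ℝ) ≤ (k : ℝ) + 1 := by positivity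
          have hbase10 : (0:ℝ) ≤ Cc * ((k : ℝ) + 1) := mul_nonneg hC0 hk10
          have hbase20 : (0:ℝ) ≤ Cc * ((k : ℝ) + 2) := mul_nonneg hC0 hk20
          have hsplit : Finset.Icc r m = insert r (Finset.Icc (r + 1) m) := by
            rw [Finset.Icc_add_one_left_eq_Ioc, Finset.Ioc_insert_left hrm.le]
          have hnotmem : r ∉ Finset.Icc (r + 1) m := by simp
          have hsum : ∑ i ∈ Finset.Icc r m, A r i * L i x
              = A r r * L r x + ∑ i ∈ Finset.Icc (r + 1) m, A r i * L i x := by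
            rw [hsplit, Finset.sum_insert hnotmem]
          set t : ℝ := (Cc * ((k : ℝ) + 1)) ^ e with htdef
          have ht0 : 0 ≤ t := pow_nonneg hbase10 e
          have hμk0 : (0:ℝ) ≤ μ ^ k := by positivity
          have hterm1 : A r r * L r x ≤ μ * ((Cc * ((k : ℝ) + 1)) ^ (m - r) * μ ^ k * l g) :=
            mul_le_mul (hdiag r h1 hrm.le) ihk (hLnonneg _ _) (by linarith)
          have hoff : ∀ i ∈ Finset.Icc (r + 1) m,
              A r i * L i x ≤ B * (t * μ ^ k * l g) := by
            intro i hi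
            simp only [Finset.mem_Icc] at hi
            have hLi := ihd i (by omega) hi.2 (by omega) k g
            have hple : (Cc * ((k : ℝ) + 1)) ^ (m - i) ≤ t := by
              rw [htdef]
              exact pow_le_pow_right₀ (by nlinarith [hC1, hk10]) (by omega)
            have hLi2 : L i x ≤ t * μ ^ k * l g := by
              refine hLi.trans ?_
              exact mul_le_mul_of_nonneg_right
                (mul_le_mul_of_nonneg_right hple hμk0) (hl g)
            exact mul_le_mul (hAB r i h1 (by omega) hi.2) hLi2 (hLnonneg _ _) hB0
          have hcard : ((Finset.Icc (r + 1) m).card : ℝ) ≤ (m : ℝ) := by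
            rw [Nat.card_Icc]
            exact_mod_cast Nat.le_of_lt_succ (by omega)
          have hprod0 : (0:ℝ) ≤ B * (t * μ ^ k * l g) :=
            mul_nonneg hB0 (mul_nonneg (mul_nonneg ht0 hμk0) (hl g))
          have hsum2 : ∑ i ∈ Finset.Icc (r + 1) m, A r i * L i x
              ≤ (m : ℝ) * (B * (t * μ ^ k * l g)) := by
            calc ∑ i ∈ Finset.Icc (r + 1) m, A r i * L i x
                ≤ (Finset.Icc (r + 1) m).card • (B * (t * μ ^ k * l g)) :=
                  Finset.sum_le_card_nsmul _ _ _ hoff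
              _ = ((Finset.Icc (r + 1) m).card : ℝ) * (B * (t * μ ^ k * l g)) := by
                  rw [nsmul_eq_mul]
              _ ≤ (m : ℝ) * (B * (t * μ ^ k * l g)) :=
                  mul_le_mul_of_nonneg_right hcard hprod0
          have hts : t ≤ (Cc * ((k : ℝ) + 2)) ^ e := by
            rw [htdef]
            exact pow_le_pow_left₀ hbase10 (by nlinarith) e
          have hmain : L r (α x) ≤ μ * ((Cc * ((k : ℝ) + 1)) ^ (m - r) * μ ^ k * l g)
              + (m : ℝ) * (B * (t * μ ^ k * l g)) :=
            (hstep r h1 hrm.le x).trans (by rw [hsum]; exact add_le_add hterm1 hsum2)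
          have hgoal : μ * ((Cc * ((k : ℝ) + 1)) ^ (m - r) * μ ^ k * l g)
              + (m : ℝ) * (B * (t * μ ^ k * l g))
              ≤ (Cc * ((k : ℝ) + 2)) ^ (m - r) * μ ^ (k + 1) * l g := by
            have hrw : (Cc * ((k : ℝ) + 1)) ^ (m - r) = Cc * ((k : ℝ) + 1) * t := by
              rw [he, pow_succ, htdef, mul_comm]
            have hrw2 : (Cc * ((k : ℝ) + 2)) ^ (m - r)
                = Cc * ((k : ℝ) + 2) * (Cc * ((k : ℝ) + 2)) ^ e := by
              rw [he, pow_succ, mul_comm]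
            rw [hrw, hrw2, pow_succ]
            have hlg := hl g
            have hs0 : (0:ℝ) ≤ (Cc * ((k : ℝ) + 2)) ^ e := pow_nonneg hbase20 e
            have h2' : (μ * (Cc * ((k : ℝ) + 1)) + (m : ℝ) * B) ≤ μ * (Cc * ((k : ℝ) + 2)) := by
              nlinarith
            have h3' : t * μ ^ k * l g ≤ (Cc * ((k : ℝ) + 2)) ^ e * μ ^ k * l g :=
              mul_le_mul_of_nonneg_right (mul_le_mul_of_nonneg_right hts hμk0) hlg
            calc μ * (Cc * ((k : ℝ) + 1) * t * μ ^ k * l g)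
                + (m : ℝ) * (B * (t * μ ^ k * l g))
                = (μ * (Cc * ((k : ℝ) + 1)) + (m : ℝ) * B) * (t * μ ^ k * l g) := by ring
              _ ≤ (μ * (Cc * ((k : ℝ) + 2))) * (t * μ ^ k * l g) :=
                  mul_le_mul_of_nonneg_right h2'
                    (mul_nonneg (mul_nonneg ht0 hμk0) hlg)
              _ ≤ (μ * (Cc * ((k : ℝ) + 2))) * ((Cc * ((k : ℝ) + 2)) ^ e * μ ^ k * l g) := by
                  apply mul_le_mul_of_nonneg_left h3'
                  nlinarith
              _ = Cc * ((k : ℝ) + 2) * (Cc * ((k : ℝ) + 2)) ^ e * (μ ^ k * μ) * l g := by ring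
          have hcast : (Cc * ((↑(k + 1) : ℝ) + 1)) = Cc * ((k : ℝ) + 2) := by push_cast; ring
          rw [hcast]
          exact hmain.trans hgoal
  -- final bound
  have final : ∀ k, ∀ g : G, l ((⇑α)^[k] g)
      ≤ (m : ℝ) * ((Cc * ((k : ℝ) + 1)) ^ (m - 1) * μ ^ k * l g) := by
    intro k g
    have hk10 : (0:ℝ) ≤ (k : ℝ) + 1 := by positivity
    have hbase10 : (0:ℝ) ≤ Cc * ((k : ℝ) + 1) := mul_nonneg hC0 hk10
    have hμk0 : (0:ℝ) ≤ μ ^ k := by positivity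
    have hb0 : (0:ℝ) ≤ (Cc * ((k : ℝ) + 1)) ^ (m - 1) * μ ^ k * l g :=
      mul_nonneg (mul_nonneg (pow_nonneg hbase10 _) hμk0) (hl g)
    rw [hdecomp ((⇑α)^[k] g)]
    have hbound : ∀ r ∈ Finset.Icc 1 m,
        L r ((⇑α)^[k] g) ≤ (Cc * ((k : ℝ) + 1)) ^ (m - 1) * μ ^ k * l g := by
      intro r hr
      simp only [Finset.mem_Icc] at hr
      refine (key (m - r) r hr.1 hr.2 le_rfl k g).trans ?_
      refine mul_le_mul_of_nonneg_right (mul_le_mul_of_nonneg_right ?_ hμk0) (hl g)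
      exact pow_le_pow_right₀ (by nlinarith [hC1, hk10]) (by omega)
    calc ∑ r ∈ Finset.Icc 1 m, L r ((⇑α)^[k] g)
        ≤ (Finset.Icc 1 m).card • ((Cc * ((k : ℝ) + 1)) ^ (m - 1) * μ ^ k * l g) :=
          Finset.sum_le_card_nsmul _ _ _ hbound
      _ = (m : ℝ) * ((Cc * ((k : ℝ) + 1)) ^ (m - 1) * μ ^ k * l g) := by
          rw [nsmul_eq_mul, Nat.card_Icc]
          norm_num
  refine ⟨Polynomial.C ((m : ℝ) * Cc ^ (m - 1)) * (X + 1) ^ (m - 1), ?_, ?_⟩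
  · refine (natDegree_C_mul_le _ _).trans ?_
    refine (natDegree_pow_le).trans ?_
    have h1d : (X + (1:ℝ[X])).natDegree ≤ 1 := by
      rw [← Polynomial.C_1]
      exact le_of_eq (natDegree_X_add_C 1)
    calc (m - 1) * (X + (1:ℝ[X])).natDegree ≤ (m - 1) * 1 := Nat.mul_le_mul_left _ h1d
      _ = m - 1 := Nat.mul_one _
  · intro g k hk
    have heval : (Polynomial.C ((m : ℝ) * Cc ^ (m - 1)) * (X + 1) ^ (m - 1)).eval (k : ℝ)
        = (m : ℝ) * Cc ^ (m - 1) * ((k : ℝ) + 1) ^ (m - 1) := by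
      simp [eval_pow]
    rw [heval]
    refine (final k g).trans (le_of_eq ?_)
    rw [mul_pow]
    ring
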